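/- arXiv:2603.12024 — 4 statements merged into one kernel-verified Lean document; each statement's English description precedes it below -/
import Mathlib

section
/- Let {M^{a|x}} be a finite family of POVMs on ℂ^d (a ∈ A, x ∈ X) and let |ψ⟩ ∈ ℂ^d ⊗ ℂ^d be a pure state of Schmidt rank d. Define the assemblage σ^{a|x} = Tr_A[(M^{a|x} ⊗ 𝟙)|ψ⟩⟨ψ|]. If the assemblage is star-unsteerable with respect to x* (i.e., there exist positive semidefinite operators ρ^{a,b|x} on ℂ^d, for x ≠ x*, with Σ_b ρ^{a,b|x} = σ^{a|x} for all a and Σ_a ρ^{a,b|x} = σ^{b|x*} for all b), then the PMD {M^{a|x}} is star-compatible with respect to x*: there exist POVMs {J^{a,b|x}}_{a,b∈A} for each x ≠ x* with Σ_b J^{a,b|x} = M^{a|x} and Σ_a J^{a,b|x} = M^{b|x*}. -/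
open Matrix BigOperators Kronecker ComplexOrder

/-- Partial trace over the first tensor factor. -/
noncomputable def trA {dA dB : Type*} [Fintype dA]
    (M : Matrix (dA × dB) (dA × dB) ℂ) : Matrix dB dB ℂ :=
  Matrix.of fun j j' => ∑ i, M (i, j) (i, j')

/-!
Write `Ψ` for the coefficient matrix `Ψ i j = ψ (i, j)`. The assemblage element produced by an
operator `N` is `trA ((N ⊗ₖ 1) |ψ⟩⟨ψ|) = (Ψᴴ N Ψ)ᵀ`, and full Schmidt rank makes `Ψ` invertible,
so `ρ ↦ (Ψᴴ)⁻¹ ρᵀ Ψ⁻¹` inverts this map. It is additive and, being a congruence, preserves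
positivity, so it carries the joint assemblage `ρ^{a,b|x}` to a joint measurement `J^{a,b|x}` with
the required marginals.
-/

theorem Matrix.isUnit_of_rank_eq_card {n K : Type*} [Fintype n] [DecidableEq n] [Field K]
    {A : Matrix n n K} (h : A.rank = Fintype.card n) : IsUnit A := by
  rw [← mulVec_surjective_iff_isUnit]
  change Function.Surjective A.mulVecLin
  rw [← LinearMap.range_eq_top]
  apply Submodule.eq_top_of_finrank_eq
  rw [← Matrix.rank, h, Module.finrank_fintype_fun_eq_card]

theorem trA_kronecker_one_mul_vecMulVec {m n : Type*} [Fintype m] [Fintype n] [DecidableEq n]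
    (N : Matrix m m ℂ) (ψ : m × n → ℂ) :
    trA ((N ⊗ₖ (1 : Matrix n n ℂ)) * vecMulVec ψ (star ψ))
      = ((of fun i j => ψ (i, j))ᴴ * N * of fun i j => ψ (i, j))ᵀ := by
  ext j j'
  simp only [trA, of_apply, transpose_apply, mul_apply, kroneckerMap_apply, vecMulVec_apply,
    conjTranspose_apply, Fintype.sum_prod_type, one_apply, Pi.star_apply, mul_ite, mul_one,
    mul_zero, ite_mul, zero_mul, Finset.sum_ite_eq, Finset.mem_univ, if_true, Finset.sum_mul]
  rw [Finset.sum_comm]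
  exact Finset.sum_congr rfl fun k _ => Finset.sum_congr rfl fun i _ => by ring

section SteeringPreimage

variable {n : Type*} [Fintype n] [DecidableEq n]

noncomputable def steeringPreimage (Ψ ρ : Matrix n n ℂ) : Matrix n n ℂ :=
  (Ψᴴ)⁻¹ * ρᵀ * Ψ⁻¹

theorem steeringPreimage_transpose_conjTranspose_mul_mul {Ψ : Matrix n n ℂ} (hΨ : IsUnit Ψ)
    (N : Matrix n n ℂ) : steeringPreimage Ψ (Ψᴴ * N * Ψ)ᵀ = N := by
  have hΨH : IsUnit Ψᴴ := hΨ.star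
  rw [steeringPreimage, transpose_transpose, ← Matrix.mul_assoc, ← Matrix.mul_assoc,
    nonsing_inv_mul _ ((isUnit_iff_isUnit_det _).mp hΨH), Matrix.one_mul, Matrix.mul_assoc,
    mul_nonsing_inv _ ((isUnit_iff_isUnit_det _).mp hΨ), Matrix.mul_one]

theorem steeringPreimage_sum {ι : Type*} (Ψ : Matrix n n ℂ) (s : Finset ι)
    (ρ : ι → Matrix n n ℂ) :
    steeringPreimage Ψ (∑ i ∈ s, ρ i) = ∑ i ∈ s, steeringPreimage Ψ (ρ i) := by
  simp only [steeringPreimage, transpose_sum, Finset.mul_sum, Finset.sum_mul]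

theorem Matrix.PosSemidef.steeringPreimage {ρ : Matrix n n ℂ} (hρ : ρ.PosSemidef)
    (Ψ : Matrix n n ℂ) : (steeringPreimage Ψ ρ).PosSemidef := by
  have h := hρ.transpose.mul_mul_conjTranspose_same (Ψᴴ)⁻¹
  rwa [conjTranspose_nonsing_inv, conjTranspose_conjTranspose] at h

end SteeringPreimage

theorem starUnsteerable_imp_starCompatible_general (d : ℕ)
    (A X : Type) [Fintype A] [Fintype X] (xs : X)
    (M : X → A → Matrix (Fin d) (Fin d) ℂ)
    (hpovm : ∀ x, ∑ a, M x a = 1)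
    (ψ : Fin d × Fin d → ℂ)
    (hrank : (Matrix.of fun i j : Fin d => ψ (i, j)).rank = d)
    (hunst : ∃ ρ : X → A → A → Matrix (Fin d) (Fin d) ℂ,
      (∀ x, x ≠ xs → ∀ a b, (ρ x a b).PosSemidef) ∧
      (∀ x, x ≠ xs → ∀ a, ∑ b, ρ x a b
          = trA ((M x a ⊗ₖ (1 : Matrix (Fin d) (Fin d) ℂ)) * Matrix.vecMulVec ψ (star ψ))) ∧
      (∀ x, x ≠ xs → ∀ b, ∑ a, ρ x a b
          = trA ((M xs b ⊗ₖ (1 : Matrix (Fin d) (Fin d) ℂ)) * Matrix.vecMulVec ψ (star ψ)))) :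
    ∃ J : X → A → A → Matrix (Fin d) (Fin d) ℂ,
      (∀ x, x ≠ xs → ∀ a b, (J x a b).PosSemidef) ∧
      (∀ x, x ≠ xs → ∑ a, ∑ b, J x a b = 1) ∧
      (∀ x, x ≠ xs → ∀ a, ∑ b, J x a b = M x a) ∧
      (∀ x, x ≠ xs → ∀ b, ∑ a, J x a b = M xs b) := by
  obtain ⟨ρ, hρpsd, hρrow, hρcol⟩ := hunst
  set Ψ : Matrix (Fin d) (Fin d) ℂ := of fun i j => ψ (i, j)
  have hΨ : IsUnit Ψ := isUnit_of_rank_eq_card (by rwa [Fintype.card_fin])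
  have hrow : ∀ x, x ≠ xs → ∀ a, ∑ b, steeringPreimage Ψ (ρ x a b) = M x a := fun x hx a => by
    rw [← steeringPreimage_sum, hρrow x hx a, trA_kronecker_one_mul_vecMulVec,
      steeringPreimage_transpose_conjTranspose_mul_mul hΨ]
  have hcol : ∀ x, x ≠ xs → ∀ b, ∑ a, steeringPreimage Ψ (ρ x a b) = M xs b := fun x hx b => by
    rw [← steeringPreimage_sum, hρcol x hx b, trA_kronecker_one_mul_vecMulVec,
      steeringPreimage_transpose_conjTranspose_mul_mul hΨ]
  refine ⟨fun x a b => steeringPreimage Ψ (ρ x a b),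
    fun x hx a b => (hρpsd x hx a b).steeringPreimage Ψ, fun x hx => ?_, hrow, hcol⟩
  rw [Finset.sum_congr rfl fun a _ => hrow x hx a, hpovm]

/-- if the assemblage produced by a PMD on a Schmidt-rank-d pure state is
star-unsteerable w.r.t. x*, then the PMD is star-compatible w.r.t. x*. -/
theorem starUnsteerable_imp_starCompatible (d : ℕ) (hd : 0 < d)
    (A X : Type) [Fintype A] [Fintype X] (xs : X)
    (M : X → A → Matrix (Fin d) (Fin d) ℂ)
    (hpsd : ∀ x a, (M x a).PosSemidef) (hpovm : ∀ x, ∑ a, M x a = 1)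
    (ψ : Fin d × Fin d → ℂ)
    (hnorm : ∑ p : Fin d × Fin d, Complex.normSq (ψ p) = 1)
    (hrank : (Matrix.of fun i j : Fin d => ψ (i, j)).rank = d)
    (hunst : ∃ ρ : X → A → A → Matrix (Fin d) (Fin d) ℂ,
      (∀ x, x ≠ xs → ∀ a b, (ρ x a b).PosSemidef) ∧
      (∀ x, x ≠ xs → ∀ a, ∑ b, ρ x a b
          = trA ((M x a ⊗ₖ (1 : Matrix (Fin d) (Fin d) ℂ)) * Matrix.vecMulVec ψ (star ψ))) ∧
      (∀ x, x ≠ xs → ∀ b, ∑ a, ρ x a b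
          = trA ((M xs b ⊗ₖ (1 : Matrix (Fin d) (Fin d) ℂ)) * Matrix.vecMulVec ψ (star ψ)))) :
    ∃ J : X → A → A → Matrix (Fin d) (Fin d) ℂ,
      (∀ x, x ≠ xs → ∀ a b, (J x a b).PosSemidef) ∧
      (∀ x, x ≠ xs → ∑ a, ∑ b, J x a b = 1) ∧
      (∀ x, x ≠ xs → ∀ a, ∑ b, J x a b = M x a) ∧
      (∀ x, x ≠ xs → ∀ b, ∑ a, J x a b = M xs b) :=
  starUnsteerable_imp_starCompatible_general d A X xs M hpovm ψ hrank hunst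
end

section
/- Let ρ_AB be a density operator on H_A ⊗ H_B with ρ_A = Tr_B ρ_AB, and let {G^{a,e|x}} be a feasible solution of the prepare-and-measure guessing SDP for a PMD {M^{a|x}}. Then τ^{a,e|x} := Tr_A[(G^{a,e|x} ⊗ 𝟙)ρ_AB] is a feasible solution of the assemblage guessing SDP for the assemblage σ^{a|x} = Tr_A[(M^{a|x} ⊗ 𝟙)ρ_AB], with the same objective value: Σ_e Tr τ^{e,e|x*} = Σ_e Tr[G^{e,e|x*} ρ_A]. Consequently, p_guess^{x*}(σ(M, ρ_AB)) ≥ p_guess^{x*}(M, ρ_A). -/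
/-!
The map `G ↦ trA ((G ⊗ 1) ρAB)` is linear, so it carries the equality constraints of the
prepare-and-measure SDP to those of the assemblage SDP, and for `ρAB ⪰ 0` it is positive
(factor `G = Bᴴ B` and use cyclicity of `trA` against `B ⊗ 1`). It preserves the objective,
since `Tr trA ((G ⊗ 1) ρAB) = Tr (G ρA)`. Hence every prepare-and-measure value is an
assemblage value, and the assemblage values are bounded by `Re Σₐ Tr σ^{a|x*}`, so the
suprema compare.
-/

open Matrix BigOperators Kronecker ComplexOrder

/-- The prepare-and-measure guessing probability for a PMD `M`, target setting `xs`
and state `ρA`. -/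
noncomputable def pguessPM {dA : Type*} [Fintype dA] {A X : Type} [Fintype A] [Fintype X]
    (M : X → A → Matrix dA dA ℂ) (xs : X) (ρA : Matrix dA dA ℂ) : ℝ :=
  sSup {r : ℝ | ∃ G : X → A → A → Matrix dA dA ℂ,
    (∀ x a e, (G x a e).PosSemidef) ∧
    (∀ x a, ∑ e, G x a e = M x a) ∧
    (∀ x e, ∑ a, G x a e = ∑ a, G xs a e) ∧
    r = (∑ e, (G xs e e * ρA).trace).re}

/-- The (one-sided device-independent) guessing probability of an assemblage `σ` for
target setting `xs`. -/
noncomputable def pguessAsm {dB : Type*} [Fintype dB] {A X : Type} [Fintype A] [Fintype X]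
    (σ : X → A → Matrix dB dB ℂ) (xs : X) : ℝ :=
  sSup {r : ℝ | ∃ τ : X → A → A → Matrix dB dB ℂ,
    (∀ x a e, (τ x a e).PosSemidef) ∧
    (∀ x a, ∑ e, τ x a e = σ x a) ∧
    (∀ x e, ∑ a, τ x a e = ∑ a, τ xs a e) ∧
    r = (∑ e, (τ xs e e).trace).re}

section PartialTrace

variable {dA dB : Type*} [Fintype dA]

lemma trA_add (N N' : Matrix (dA × dB) (dA × dB) ℂ) : trA (N + N') = trA N + trA N' := by
  ext j j'
  simp [trA, Finset.sum_add_distrib]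

lemma posSemidef_trA {N : Matrix (dA × dB) (dA × dB) ℂ} (hN : N.PosSemidef) :
    (trA N).PosSemidef := by
  have : trA N = ∑ i, N.submatrix (fun j => (i, j)) (fun j => (i, j)) := by
    ext j j'
    simp [trA, Matrix.sum_apply]
  exact this ▸ posSemidef_sum _ fun i _ => hN.submatrix _

variable [Fintype dB] [DecidableEq dB]

lemma kronecker_one_mul_apply (C : Matrix dA dA ℂ) (N : Matrix (dA × dB) (dA × dB) ℂ)
    (i : dA) (j : dB) (p : dA × dB) :
    ((C ⊗ₖ (1 : Matrix dB dB ℂ)) * N) (i, j) p = ∑ k, C i k * N (k, j) p := by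
  rw [mul_apply, Fintype.sum_prod_type]
  refine Finset.sum_congr rfl fun k _ => ?_
  simp [one_apply, ite_mul]

lemma mul_kronecker_one_apply (C : Matrix dA dA ℂ) (N : Matrix (dA × dB) (dA × dB) ℂ)
    (i : dA) (j : dB) (p : dA × dB) :
    (N * (C ⊗ₖ (1 : Matrix dB dB ℂ))) p (i, j) = ∑ k, N p (k, j) * C k i := by
  rw [mul_apply, Fintype.sum_prod_type]
  refine Finset.sum_congr rfl fun k _ => ?_
  simp [one_apply, mul_ite]

lemma trA_kronecker_one_mul_comm (C : Matrix dA dA ℂ) (N : Matrix (dA × dB) (dA × dB) ℂ) :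
    trA ((C ⊗ₖ (1 : Matrix dB dB ℂ)) * N) = trA (N * (C ⊗ₖ (1 : Matrix dB dB ℂ))) := by
  ext j j'
  simp only [trA, of_apply, kronecker_one_mul_apply, mul_kronecker_one_apply]
  rw [Finset.sum_comm]
  exact Finset.sum_congr rfl fun k _ => Finset.sum_congr rfl fun i _ => mul_comm _ _

lemma posSemidef_trA_kronecker_one_mul {G : Matrix dA dA ℂ} (hG : G.PosSemidef)
    {ρ : Matrix (dA × dB) (dA × dB) ℂ} (hρ : ρ.PosSemidef) :
    (trA ((G ⊗ₖ (1 : Matrix dB dB ℂ)) * ρ)).PosSemidef := by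
  classical
  obtain ⟨B, rfl⟩ : ∃ B : Matrix dA dA ℂ, G = Bᴴ * B := by
    open scoped MatrixOrder in
    exact CStarAlgebra.nonneg_iff_eq_star_mul_self.mp hG.nonneg
  have hfactor : (Bᴴ * B) ⊗ₖ (1 : Matrix dB dB ℂ)
      = (Bᴴ ⊗ₖ (1 : Matrix dB dB ℂ)) * (B ⊗ₖ (1 : Matrix dB dB ℂ)) := by
    rw [← mul_kronecker_mul, one_mul]
  have hconj : Bᴴ ⊗ₖ (1 : Matrix dB dB ℂ) = (B ⊗ₖ (1 : Matrix dB dB ℂ))ᴴ := by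
    rw [conjTranspose_kronecker, conjTranspose_one]
  rw [hfactor, Matrix.mul_assoc, trA_kronecker_one_mul_comm, hconj]
  exact posSemidef_trA (hρ.mul_mul_conjTranspose_same _)

lemma sum_trA_kronecker_one_mul {ι : Type*} (s : Finset ι) (f : ι → Matrix dA dA ℂ)
    (ρ : Matrix (dA × dB) (dA × dB) ℂ) :
    ∑ i ∈ s, trA ((f i ⊗ₖ (1 : Matrix dB dB ℂ)) * ρ)
      = trA ((∑ i ∈ s, f i) ⊗ₖ (1 : Matrix dB dB ℂ) * ρ) :=
  (map_sum (AddMonoidHom.mk' (fun C : Matrix dA dA ℂ => trA ((C ⊗ₖ (1 : Matrix dB dB ℂ)) * ρ))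
    fun C C' => by rw [add_kronecker, Matrix.add_mul, trA_add]) f s).symm

lemma trace_trA_kronecker_one_mul (G : Matrix dA dA ℂ) (ρ : Matrix (dA × dB) (dA × dB) ℂ) :
    (trA ((G ⊗ₖ (1 : Matrix dB dB ℂ)) * ρ)).trace
      = (G * of fun i i' => ∑ j, ρ (i, j) (i', j)).trace := by
  simp only [trace, diag, trA, of_apply, kronecker_one_mul_apply]
  simp only [mul_apply, of_apply, Finset.mul_sum]
  rw [Finset.sum_comm]
  exact Finset.sum_congr rfl fun i _ => Finset.sum_comm

end PartialTrace

/-- The constraints shared by the prepare-and-measure and the assemblage guessing SDPs. -/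
def IsGuessingFeasible {n A X : Type*} [Fintype A] (M : X → A → Matrix n n ℂ) (xs : X)
    (G : X → A → A → Matrix n n ℂ) : Prop :=
  (∀ x a e, (G x a e).PosSemidef) ∧
  (∀ x a, ∑ e, G x a e = M x a) ∧
  (∀ x e, ∑ a, G x a e = ∑ a, G xs a e)

namespace IsGuessingFeasible

theorem trA_kronecker_one_mul {dA dB : Type*} [Fintype dA] [Fintype dB] [DecidableEq dB]
    {A X : Type*} [Fintype A] {M : X → A → Matrix dA dA ℂ} {xs : X}
    {G : X → A → A → Matrix dA dA ℂ} (hG : IsGuessingFeasible M xs G)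
    {ρ : Matrix (dA × dB) (dA × dB) ℂ} (hρ : ρ.PosSemidef) :
    IsGuessingFeasible (fun x a => trA ((M x a ⊗ₖ (1 : Matrix dB dB ℂ)) * ρ)) xs
      (fun x a e => trA ((G x a e ⊗ₖ (1 : Matrix dB dB ℂ)) * ρ)) := by
  obtain ⟨hpsd, hsum, hind⟩ := hG
  refine ⟨fun x a e => posSemidef_trA_kronecker_one_mul (hpsd x a e) hρ, fun x a => ?_,
    fun x e => ?_⟩
  · rw [sum_trA_kronecker_one_mul, hsum]
  · rw [sum_trA_kronecker_one_mul, sum_trA_kronecker_one_mul, hind]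

lemma sum_trace_diag_le {n A X : Type*} [Fintype n] [Fintype A] {M : X → A → Matrix n n ℂ}
    {xs : X} {τ : X → A → A → Matrix n n ℂ}
    (hτ : IsGuessingFeasible M xs τ) (x : X) :
    ∑ e, (τ x e e).trace ≤ ∑ a, (M x a).trace := by
  simp_rw [← hτ.2.1 x, trace_sum]
  rw [Finset.sum_comm]
  exact Finset.sum_le_sum fun e _ =>
    Finset.single_le_sum (fun a _ => (hτ.1 x a e).trace_nonneg) (Finset.mem_univ e)

lemma re_sum_trace_diag_le_pguessAsm {dB : Type*} [Fintype dB]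
    {A X : Type} [Fintype A] [Fintype X]
    {σ : X → A → Matrix dB dB ℂ} {xs : X} {τ : X → A → A → Matrix dB dB ℂ}
    (hτ : IsGuessingFeasible σ xs τ) :
    (∑ e, (τ xs e e).trace).re ≤ pguessAsm σ xs := by
  refine le_csSup ⟨(∑ a, (σ xs a).trace).re, ?_⟩ ⟨τ, hτ.1, hτ.2.1, hτ.2.2, rfl⟩
  rintro _ ⟨t, htpsd, htsum, htind, rfl⟩
  exact Complex.re_le_re (sum_trace_diag_le ⟨htpsd, htsum, htind⟩ xs)

end IsGuessingFeasible

theorem pguessPM_le_pguessAsm_trA {dA dB : Type*} [Fintype dA] [Fintype dB] [DecidableEq dB]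
    {A X : Type} [Fintype A] [Fintype X] {xs : X} {ρ : Matrix (dA × dB) (dA × dB) ℂ}
    (hρ : ρ.PosSemidef) {M : X → A → Matrix dA dA ℂ} {G : X → A → A → Matrix dA dA ℂ}
    (hG : IsGuessingFeasible M xs G) :
    pguessPM M xs (of fun i i' => ∑ j, ρ (i, j) (i', j))
      ≤ pguessAsm (fun x a => trA ((M x a ⊗ₖ (1 : Matrix dB dB ℂ)) * ρ)) xs := by
  refine csSup_le ⟨_, G, hG.1, hG.2.1, hG.2.2, rfl⟩ ?_
  rintro _ ⟨G', hpsd, hsum, hind, rfl⟩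
  simpa only [trace_trA_kronecker_one_mul] using
    (IsGuessingFeasible.trA_kronecker_one_mul ⟨hpsd, hsum, hind⟩ hρ).re_sum_trace_diag_le_pguessAsm

theorem assemblage_guess_ge_pm_general {dA dB : Type*} [Fintype dA] [Fintype dB]
    [DecidableEq dB]
    (A X : Type) [Fintype A] [Fintype X] (xs : X)
    (ρAB : Matrix (dA × dB) (dA × dB) ℂ) (hρ : ρAB.PosSemidef)
    (M : X → A → Matrix dA dA ℂ)
    (G : X → A → A → Matrix dA dA ℂ)
    (hGpsd : ∀ x a e, (G x a e).PosSemidef)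
    (hGsum : ∀ x a, ∑ e, G x a e = M x a)
    (hGind : ∀ x e, ∑ a, G x a e = ∑ a, G xs a e) :
    let ρA : Matrix dA dA ℂ := Matrix.of fun i i' => ∑ j, ρAB (i, j) (i', j)
    let σ : X → A → Matrix dB dB ℂ :=
      fun x a => trA ((M x a ⊗ₖ (1 : Matrix dB dB ℂ)) * ρAB)
    let τ : X → A → A → Matrix dB dB ℂ :=
      fun x a e => trA ((G x a e ⊗ₖ (1 : Matrix dB dB ℂ)) * ρAB)
    (∀ x a e, (τ x a e).PosSemidef) ∧
    (∀ x a, ∑ e, τ x a e = σ x a) ∧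
    (∀ x e, ∑ a, τ x a e = ∑ a, τ xs a e) ∧
    (∑ e, (τ xs e e).trace = ∑ e, (G xs e e * ρA).trace) ∧
    pguessPM M xs ρA ≤ pguessAsm σ xs := by
  intro ρA σ τ
  have hG : IsGuessingFeasible M xs G := ⟨hGpsd, hGsum, hGind⟩
  obtain ⟨hτpsd, hτsum, hτind⟩ := hG.trA_kronecker_one_mul hρ
  exact ⟨hτpsd, hτsum, hτind,
    Finset.sum_congr rfl fun e _ => trace_trA_kronecker_one_mul _ _,
    pguessPM_le_pguessAsm_trA hρ hG⟩

/-- pushing a feasible prepare-and-measure strategy through a shared state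
gives a feasible assemblage strategy with the same objective value; consequently the
assemblage guessing probability dominates the prepare-and-measure one. -/
theorem assemblage_guess_ge_pm {dA dB : Type*} [Fintype dA] [Fintype dB]
    [DecidableEq dA] [DecidableEq dB]
    (A X : Type) [Fintype A] [Fintype X] (xs : X)
    (ρAB : Matrix (dA × dB) (dA × dB) ℂ) (hρ : ρAB.PosSemidef) (htr : ρAB.trace = 1)
    (M : X → A → Matrix dA dA ℂ)
    (hpsd : ∀ x a, (M x a).PosSemidef) (hpovm : ∀ x, ∑ a, M x a = 1)
    (G : X → A → A → Matrix dA dA ℂ)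
    (hGpsd : ∀ x a e, (G x a e).PosSemidef)
    (hGsum : ∀ x a, ∑ e, G x a e = M x a)
    (hGind : ∀ x e, ∑ a, G x a e = ∑ a, G xs a e) :
    let ρA : Matrix dA dA ℂ := Matrix.of fun i i' => ∑ j, ρAB (i, j) (i', j)
    let σ : X → A → Matrix dB dB ℂ :=
      fun x a => trA ((M x a ⊗ₖ (1 : Matrix dB dB ℂ)) * ρAB)
    let τ : X → A → A → Matrix dB dB ℂ :=
      fun x a e => trA ((G x a e ⊗ₖ (1 : Matrix dB dB ℂ)) * ρAB)
    (∀ x a e, (τ x a e).PosSemidef) ∧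
    (∀ x a, ∑ e, τ x a e = σ x a) ∧
    (∀ x e, ∑ a, τ x a e = ∑ a, τ xs a e) ∧
    (∑ e, (τ xs e e).trace = ∑ e, (G xs e e * ρA).trace) ∧
    pguessPM M xs ρA ≤ pguessAsm σ xs :=
  assemblage_guess_ge_pm_general A X xs ρAB hρ M G hGpsd hGsum hGind
end

section
/- Star-incompatibility weight bound: let the PMD {M^{a|x}} decompose as M^{a|x} = (1−w)F^{a|x} + w E^{a|x} where {F^{a|x}} is a star-compatible PMD w.r.t. x* and {E^{a|x}} is any PMD, w ∈ [0,1]. Then for any density operator ρ_A, the prepare-and-measure guessing probability satisfies p_guess^{x*}(M, ρ_A) ≥ 1 − w(1 − 1/|A|). -/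
/-!
Eve combines two strategies. For the star-compatible part `F` she uses the joint measurement
`J` at `x ≠ x*` and reads off the outcome of `F^{·|x*}` itself at `x*`, which always guesses
correctly. For the noise part `E` she guesses uniformly at random, independently of the outcome,
which is correct with probability `1/|A|`. Feasibility and the guessing value are both linear
in the strategy, so the mixture with weights `1 - w` and `w` is a feasible strategy for `M`
achieving `(1 - w) + w/|A|`. The supremum is finite because the value of every feasible
strategy is bounded by `Tr[(Σ_a M^{a|x*}) ρ_A]`.
-/

open Matrix BigOperators ComplexOrder

theorem Matrix.PosSemidef.re_trace_mul_nonneg {n : Type*} [Fintype n]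
    {P Q : Matrix n n ℂ} (hP : P.PosSemidef) (hQ : Q.PosSemidef) :
    0 ≤ (P * Q).trace.re := by
  classical
  open scoped MatrixOrder in
  obtain ⟨B, rfl⟩ := CStarAlgebra.nonneg_iff_eq_star_mul_self.mp hQ.nonneg
  rw [star_eq_conjTranspose, ← Matrix.mul_assoc, trace_mul_comm, ← Matrix.mul_assoc]
  exact (Complex.nonneg_iff.mp (hP.mul_mul_conjTranspose_same B).trace_nonneg).1

theorem Matrix.PosSemidef.real_smul {n : Type*} {c : ℝ} (hc : 0 ≤ c)
    {P : Matrix n n ℂ} (hP : P.PosSemidef) : ((c : ℂ) • P).PosSemidef :=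
  hP.smul (Complex.zero_le_real.mpr hc)

section Strategies

variable {dA : Type*} {A X : Type} [Fintype A]

/-- `G x a e` is the effect of obtaining outcome `a` at setting `x` while Eve guesses `e`. -/
structure IsPMStrategy (M : X → A → Matrix dA dA ℂ) (xs : X)
    (G : X → A → A → Matrix dA dA ℂ) : Prop where
  posSemidef : ∀ x a e, (G x a e).PosSemidef
  sum_guess : ∀ x a, ∑ e, G x a e = M x a
  sum_outcome : ∀ x e, ∑ a, G x a e = ∑ a, G xs a e

theorem IsPMStrategy.smul_add {M N : X → A → Matrix dA dA ℂ} {xs : X}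
    {G H : X → A → A → Matrix dA dA ℂ} {s t : ℝ}
    (hG : IsPMStrategy M xs G) (hH : IsPMStrategy N xs H) (hs : 0 ≤ s) (ht : 0 ≤ t) :
    IsPMStrategy (fun x a => (s : ℂ) • M x a + (t : ℂ) • N x a) xs
      (fun x a e => (s : ℂ) • G x a e + (t : ℂ) • H x a e) where
  posSemidef x a e := ((hG.posSemidef x a e).real_smul hs).add ((hH.posSemidef x a e).real_smul ht)
  sum_guess x a := by
    simp only [Finset.sum_add_distrib, ← Finset.smul_sum, hG.sum_guess, hH.sum_guess]
  sum_outcome x e := by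
    simp only [Finset.sum_add_distrib, ← Finset.smul_sum, hG.sum_outcome, hH.sum_outcome]

def starStrategy [DecidableEq A] [DecidableEq X] (F : X → A → Matrix dA dA ℂ) (xs : X)
    (J : X → A → A → Matrix dA dA ℂ) : X → A → A → Matrix dA dA ℂ :=
  fun x a e => if x = xs then (if a = e then F xs a else 0) else J x a e

theorem isPMStrategy_starStrategy [DecidableEq A] [DecidableEq X]
    {F : X → A → Matrix dA dA ℂ} {xs : X} {J : X → A → A → Matrix dA dA ℂ}
    (hF : ∀ a, (F xs a).PosSemidef)
    (hJ : ∀ x, x ≠ xs → ∀ a b, (J x a b).PosSemidef)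
    (hJF : ∀ x, x ≠ xs → ∀ a, ∑ b, J x a b = F x a)
    (hJFxs : ∀ x, x ≠ xs → ∀ b, ∑ a, J x a b = F xs b) :
    IsPMStrategy F xs (starStrategy F xs J) where
  posSemidef x a e := by
    unfold starStrategy
    split_ifs with hx hae
    exacts [hF a, .zero, hJ x hx a e]
  sum_guess x a := by
    unfold starStrategy
    split_ifs with hx
    · subst hx; simp
    · exact hJF x hx a
  sum_outcome x e := by
    have hcol : ∀ y, ∑ a, starStrategy F xs J y a e = F xs e := fun y => by
      unfold starStrategy
      split_ifs with hy
      · simp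
      · exact hJFxs y hy e
    rw [hcol, hcol]

noncomputable def uniformStrategy (E : X → A → Matrix dA dA ℂ) : X → A → A → Matrix dA dA ℂ :=
  fun x a _ => (((Fintype.card A : ℝ)⁻¹ : ℝ) : ℂ) • E x a

theorem isPMStrategy_uniformStrategy [Nonempty A] {E : X → A → Matrix dA dA ℂ} {xs : X}
    (hE : ∀ x a, (E x a).PosSemidef) (hEsum : ∀ x, ∑ a, E x a = ∑ a, E xs a) :
    IsPMStrategy E xs (uniformStrategy E) where
  posSemidef x a _ := (hE x a).real_smul (inv_nonneg.mpr (Nat.cast_nonneg _))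
  sum_guess x a := by
    have hcard : (Fintype.card A : ℝ) ≠ 0 := Nat.cast_ne_zero.mpr Fintype.card_ne_zero
    simp only [uniformStrategy, Finset.sum_const, Finset.card_univ, ← Nat.cast_smul_eq_nsmul ℂ,
      smul_smul]
    rw [← Complex.ofReal_natCast, ← Complex.ofReal_mul, mul_inv_cancel₀ hcard, Complex.ofReal_one,
      one_smul]
  sum_outcome x e := by simp only [uniformStrategy, ← Finset.smul_sum, hEsum x]

variable [Fintype dA]

def guessValue (xs : X) (ρA : Matrix dA dA ℂ) (G : X → A → A → Matrix dA dA ℂ) : ℝ :=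
  (∑ e, (G xs e e * ρA).trace).re

theorem IsPMStrategy.guessValue_le {M : X → A → Matrix dA dA ℂ} {xs : X}
    {G : X → A → A → Matrix dA dA ℂ} {ρA : Matrix dA dA ℂ}
    (hG : IsPMStrategy M xs G) (hρ : ρA.PosSemidef) :
    guessValue xs ρA G ≤ ((∑ a, M xs a) * ρA).trace.re := by
  have hdiag : ∀ e, (G xs e e * ρA).trace.re ≤ ∑ a, (G xs a e * ρA).trace.re := fun e =>
    Finset.single_le_sum (fun a _ => (hG.posSemidef xs a e).re_trace_mul_nonneg hρ)
      (Finset.mem_univ e)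
  calc guessValue xs ρA G = ∑ e, (G xs e e * ρA).trace.re := Complex.re_sum _ _
    _ ≤ ∑ e, ∑ a, (G xs a e * ρA).trace.re := Finset.sum_le_sum fun e _ => hdiag e
    _ = ((∑ a, M xs a) * ρA).trace.re := by
      simp only [← hG.sum_guess, Finset.sum_mul, trace_sum, Complex.re_sum]
      exact Finset.sum_comm

theorem IsPMStrategy.guessValue_le_pguessPM [Fintype X] {M : X → A → Matrix dA dA ℂ} {xs : X}
    {G : X → A → A → Matrix dA dA ℂ} {ρA : Matrix dA dA ℂ}
    (hG : IsPMStrategy M xs G) (hρ : ρA.PosSemidef) :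
    guessValue xs ρA G ≤ pguessPM M xs ρA := by
  refine le_csSup ⟨((∑ a, M xs a) * ρA).trace.re, ?_⟩
    ⟨G, hG.posSemidef, hG.sum_guess, hG.sum_outcome, rfl⟩
  rintro r ⟨H, hpsd, hguess, houtcome, rfl⟩
  exact IsPMStrategy.guessValue_le ⟨hpsd, hguess, houtcome⟩ hρ

theorem guessValue_smul_add (xs : X) (ρA : Matrix dA dA ℂ) (G H : X → A → A → Matrix dA dA ℂ)
    (s t : ℝ) :
    guessValue xs ρA (fun x a e => (s : ℂ) • G x a e + (t : ℂ) • H x a e) =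
      s * guessValue xs ρA G + t * guessValue xs ρA H := by
  simp [guessValue, Matrix.add_mul, Finset.sum_add_distrib, ← Finset.mul_sum]

theorem guessValue_starStrategy [DecidableEq A] [DecidableEq X] (F : X → A → Matrix dA dA ℂ)
    (xs : X) (J : X → A → A → Matrix dA dA ℂ) (ρA : Matrix dA dA ℂ) :
    guessValue xs ρA (starStrategy F xs J) = ((∑ a, F xs a) * ρA).trace.re := by
  simp [guessValue, starStrategy, Finset.sum_mul]

theorem guessValue_uniformStrategy (E : X → A → Matrix dA dA ℂ) (xs : X) (ρA : Matrix dA dA ℂ) :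
    guessValue xs ρA (uniformStrategy E) =
      (Fintype.card A : ℝ)⁻¹ * ((∑ a, E xs a) * ρA).trace.re := by
  simp [guessValue, uniformStrategy, Finset.sum_mul, Finset.mul_sum]

end Strategies

/-- if M = (1−w)F + wE with F star-compatible w.r.t. x*, then the
prepare-and-measure guessing probability of M is at least 1 − w(1 − 1/|A|). -/
theorem pguess_ge_of_weight_decomposition {dA : Type*} [Fintype dA] [DecidableEq dA]
    (A X : Type) [Fintype A] [DecidableEq A] [Nonempty A] [Fintype X] [DecidableEq X] (xs : X)
    (M F E : X → A → Matrix dA dA ℂ) (w : ℝ) (hw0 : 0 ≤ w) (hw1 : w ≤ 1)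
    (hFpsd : ∀ x a, (F x a).PosSemidef) (hFpovm : ∀ x, ∑ a, F x a = 1)
    (hEpsd : ∀ x a, (E x a).PosSemidef) (hEpovm : ∀ x, ∑ a, E x a = 1)
    (hM : ∀ x a, M x a = ((1 - w : ℝ) : ℂ) • F x a + ((w : ℝ) : ℂ) • E x a)
    (hFcompat : ∃ J : X → A → A → Matrix dA dA ℂ,
      (∀ x, x ≠ xs → ∀ a b, (J x a b).PosSemidef) ∧
      (∀ x, x ≠ xs → ∑ a, ∑ b, J x a b = 1) ∧
      (∀ x, x ≠ xs → ∀ a, ∑ b, J x a b = F x a) ∧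
      (∀ x, x ≠ xs → ∀ b, ∑ a, J x a b = F xs b))
    (ρA : Matrix dA dA ℂ) (hρ : ρA.PosSemidef) (htr : ρA.trace = 1) :
    1 - w * (1 - 1 / Fintype.card A) ≤ pguessPM M xs ρA := by
  obtain ⟨J, hJpsd, -, hJF, hJFxs⟩ := hFcompat
  obtain rfl : M = fun x a => ((1 - w : ℝ) : ℂ) • F x a + ((w : ℝ) : ℂ) • E x a := funext₂ hM
  have hG := (isPMStrategy_starStrategy (hFpsd xs) hJpsd hJF hJFxs).smul_add
    (isPMStrategy_uniformStrategy hEpsd fun x => (hEpovm x).trans (hEpovm xs).symm)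
    (sub_nonneg.mpr hw1) hw0
  calc 1 - w * (1 - 1 / Fintype.card A)
      = guessValue xs ρA (fun x a e => ((1 - w : ℝ) : ℂ) • starStrategy F xs J x a e +
          ((w : ℝ) : ℂ) • uniformStrategy E x a e) := by
        rw [guessValue_smul_add, guessValue_starStrategy, guessValue_uniformStrategy, hFpovm,
          hEpovm, Matrix.one_mul, htr]
        simp only [Complex.one_re]
        ring
    _ ≤ _ := hG.guessValue_le_pguessPM hρ
end

section
/- For qubit measurements M^{±|i} = (𝟙 ± η σᵢ)/2 with i ∈ {1,2,3} (Pauli X, Y, Z) and η ∈ [0,1], if η ≤ 1/√2 then the pair {M^{±|1}, M^{±|2}} is jointly measurable: the four operators G^{a,b} = (1/4)(𝟙 + aησ₁ + bησ₂), a,b ∈ {+1,−1}, are positive semidefinite, sum to the identity, and have marginals Σ_b G^{a,b} = M^{a|1} and Σ_a G^{a,b} = M^{b|2}. -/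
/-!
The marginal conditions are linear identities, since the `±η σ₂` (resp. `±η σ₁`) terms cancel in
pairs. Positivity comes from writing `𝟙 + x σ₁ + y σ₂ = !![1, z̄; z, 1]` with `z = x + y i` and
`|z|² = x² + y² = 2η² ≤ 1`; such a matrix is `Bᴴ B` for its Cholesky factor
`B = !![1, z̄; 0, √(1 - |z|²)]`.
-/

open Matrix BigOperators ComplexOrder

open ComplexConjugate in
theorem posSemidef_one_star_one_of_normSq_le_one {z : ℂ} (hz : Complex.normSq z ≤ 1) :
    (!![1, star z; z, 1] : Matrix (Fin 2) (Fin 2) ℂ).PosSemidef := by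
  set t : ℂ := ((Real.sqrt (1 - Complex.normSq z) : ℝ) : ℂ)
  have ht : z * conj z + conj t * t = 1 := by
    rw [Complex.mul_conj, Complex.conj_ofReal, ← Complex.ofReal_mul,
      Real.mul_self_sqrt (by linarith), ← Complex.ofReal_add, add_sub_cancel, Complex.ofReal_one]
  have hB : !![1, star z; 0, t]ᴴ * !![1, star z; 0, t] = !![1, star z; z, 1] := by
    ext i j
    fin_cases i <;> fin_cases j <;> simp [mul_apply, ht]
  exact hB ▸ posSemidef_conjTranspose_mul_self _

theorem one_add_smul_pauliX_add_smul_pauliY (x y : ℝ) :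
    (1 + (x : ℂ) • !![0, 1; 1, 0] + (y : ℂ) • !![0, -Complex.I; Complex.I, 0] :
      Matrix (Fin 2) (Fin 2) ℂ) = !![1, star (x + y * Complex.I); x + y * Complex.I, 1] := by
  ext i j
  fin_cases i <;> fin_cases j <;> simp

theorem posSemidef_one_add_smul_pauliX_add_smul_pauliY {x y : ℝ} (h : x ^ 2 + y ^ 2 ≤ 1) :
    (1 + (x : ℂ) • !![0, 1; 1, 0] + (y : ℂ) • !![0, -Complex.I; Complex.I, 0] :
      Matrix (Fin 2) (Fin 2) ℂ).PosSemidef := by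
  rw [one_add_smul_pauliX_add_smul_pauliY]
  exact posSemidef_one_star_one_of_normSq_le_one (by rwa [Complex.normSq_add_mul_I])

theorem two_mul_sq_le_one_of_le_one_div_sqrt_two {η : ℝ} (hη0 : 0 ≤ η)
    (hη : η ≤ 1 / Real.sqrt 2) : 2 * η ^ 2 ≤ 1 := by
  rw [le_div_iff₀ (by positivity)] at hη
  calc 2 * η ^ 2 = (η * Real.sqrt 2) ^ 2 := by rw [mul_pow, Real.sq_sqrt zero_le_two, mul_comm]
    _ ≤ 1 := pow_le_one₀ (by positivity) hη

theorem pauliXY_jointly_measurable_general (η : ℝ) (hη0 : 0 ≤ η)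
    (hη : η ≤ 1 / Real.sqrt 2) :
    let σ₁ : Matrix (Fin 2) (Fin 2) ℂ := !![0, 1; 1, 0]
    let σ₂ : Matrix (Fin 2) (Fin 2) ℂ := !![0, -Complex.I; Complex.I, 0]
    let s : Bool → ℝ := fun b => if b then 1 else -1
    let G : Bool → Bool → Matrix (Fin 2) (Fin 2) ℂ :=
      fun a b => ((1 / 4 : ℝ) : ℂ) •
        ((1 : Matrix (Fin 2) (Fin 2) ℂ) + ((s a * η : ℝ) : ℂ) • σ₁ + ((s b * η : ℝ) : ℂ) • σ₂)
    let M : Fin 2 → Bool → Matrix (Fin 2) (Fin 2) ℂ :=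
      fun i a => ((1 / 2 : ℝ) : ℂ) •
        ((1 : Matrix (Fin 2) (Fin 2) ℂ) + ((s a * η : ℝ) : ℂ) • (if i = 0 then σ₁ else σ₂))
    (∀ a b, (G a b).PosSemidef) ∧
    (∑ a : Bool, ∑ b : Bool, G a b = 1) ∧
    (∀ a, ∑ b : Bool, G a b = M 0 a) ∧
    (∀ b, ∑ a : Bool, G a b = M 1 b) := by
  intro σ₁ σ₂ s G M
  have hs : ∀ a, s a ^ 2 = 1 := by intro a; cases a <;> norm_num [s]
  have hmarg₁ : ∀ a, ∑ b : Bool, G a b = M 0 a := by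
    intro a; cases a <;> simp [G, M, s] <;> module
  have hmarg₂ : ∀ b, ∑ a : Bool, G a b = M 1 b := by
    intro b; cases b <;> simp [G, M, s] <;> module
  refine ⟨fun a b => ?_, ?_, hmarg₁, hmarg₂⟩
  · have hxy : (s a * η) ^ 2 + (s b * η) ^ 2 = 2 * η ^ 2 := by
      rw [mul_pow, mul_pow, hs, hs]; ring
    refine .smul (posSemidef_one_add_smul_pauliX_add_smul_pauliY ?_)
      (Complex.zero_le_real.mpr (by norm_num))
    linarith [two_mul_sq_le_one_of_le_one_div_sqrt_two hη0 hη]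
  · calc ∑ a, ∑ b, G a b = ∑ a, M 0 a := Fintype.sum_congr _ _ hmarg₁
      _ = 1 := by simp [M, s]; module

/-- for η ≤ 1/√2, the noisy Pauli-X and Pauli-Y qubit measurements are
jointly measurable, with joint POVM G^{a,b} = (1/4)(𝟙 + aησ₁ + bησ₂). -/
theorem pauliXY_jointly_measurable (η : ℝ) (hη0 : 0 ≤ η) (hη1 : η ≤ 1)
    (hη : η ≤ 1 / Real.sqrt 2) :
    let σ₁ : Matrix (Fin 2) (Fin 2) ℂ := !![0, 1; 1, 0]
    let σ₂ : Matrix (Fin 2) (Fin 2) ℂ := !![0, -Complex.I; Complex.I, 0]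
    let s : Bool → ℝ := fun b => if b then 1 else -1
    let G : Bool → Bool → Matrix (Fin 2) (Fin 2) ℂ :=
      fun a b => ((1 / 4 : ℝ) : ℂ) •
        ((1 : Matrix (Fin 2) (Fin 2) ℂ) + ((s a * η : ℝ) : ℂ) • σ₁ + ((s b * η : ℝ) : ℂ) • σ₂)
    let M : Fin 2 → Bool → Matrix (Fin 2) (Fin 2) ℂ :=
      fun i a => ((1 / 2 : ℝ) : ℂ) •
        ((1 : Matrix (Fin 2) (Fin 2) ℂ) + ((s a * η : ℝ) : ℂ) • (if i = 0 then σ₁ else σ₂))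
    (∀ a b, (G a b).PosSemidef) ∧
    (∑ a : Bool, ∑ b : Bool, G a b = 1) ∧
    (∀ a, ∑ b : Bool, G a b = M 0 a) ∧
    (∀ b, ∑ a : Bool, G a b = M 1 b) :=
  pauliXY_jointly_measurable_general η hη0 hη
end
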